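/- arXiv:1901.10463 — 4 statements merged into one kernel-verified Lean document; each statement's English description precedes it below -/
import Mathlib

section
/- Let (X_i, S_i)_{i ≥ 1} be i.i.d. pairs of positive-integer-valued random variables with E[X_1] < ∞ and p := P(S_1 ≤ X_1) > 0. Define B_1 = 0 and B_{i+1} = X_i + B_i·1_{S_i > X_i} for i ≥ 1, and set P_i = (B_i + S_i − 1)·1_{S_i ≤ X_i}. Then almost surely, (Σ_{i=1}^M P_i) / (Σ_{i=1}^M 1_{S_i ≤ X_i}) → E[X_1]/p + E[S_1·1_{S_1 ≤ X_1}]/p − 1 as M → ∞. (This limit is the peak age of the discrete time LCFS G/G/1 queue with preemption.) -/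
/-!
Between two deliveries the age only accumulates inter-generation times, so `B_M` is the sum of the
`X_i` since the last delivery before `M`, and `Σ_{i<M} B_i 1_{S_i ≤ X_i} = Σ_{i<M} X_i − B_M`
telescopes. Deliveries occur with asymptotic frequency `p > 0`, so the last delivery before `M`
happens at time `M − o(M)`, and the strong law for the `X_i` gives `B_M / M → 0`. Dividing numerator
and denominator by `M`, the strong law for `X_i`, `S_i 1_{S_i ≤ X_i}` and `1_{S_i ≤ X_i}` gives the
limit `(E[X] + E[S 1_{S ≤ X}] − p) / p`.
-/

open MeasureTheory ProbabilityTheory Filter Topology Finset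

section LastBefore

variable (c : ℕ → Prop) [DecidablePred c]

/-- The last index `i < M` with `c i`, and `0` if there is none. -/
def lastBefore : ℕ → ℕ
  | 0 => 0
  | M + 1 => if c M then M else lastBefore M

variable {c}

lemma count_lastBefore_add_one (M : ℕ) :
    Nat.count c (lastBefore c (M + 1) + 1) = Nat.count c (M + 1) := by
  induction M with
  | zero => simp [lastBefore]
  | succ M ih =>
    by_cases h : c (M + 1)
    · simp [lastBefore, h]
    · rw [lastBefore, if_neg h, ih, Nat.count_succ c (M + 1), if_neg h, add_zero]

lemma tendsto_atTop_of_tendsto_div_natCast {f : ℕ → ℝ} {p : ℝ} (hp : 0 < p)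
    (hf : Tendsto (fun n => f n / n) atTop (𝓝 p)) : Tendsto f atTop atTop := by
  refine (hf.pos_mul_atTop hp tendsto_natCast_atTop_atTop).congr' ?_
  filter_upwards [eventually_ne_atTop 0] with n hn
  exact div_mul_cancel₀ _ (Nat.cast_ne_zero.2 hn)

lemma tendsto_comp_div_of_tendsto_div {T : ℕ → ℝ} {μ : ℝ} {g : ℕ → ℕ}
    (hT : Tendsto (fun n => T n / n) atTop (𝓝 μ))
    (hg : Tendsto (fun M => (g M : ℝ) / M) atTop (𝓝 1)) :
    Tendsto (fun M => T (g M) / M) atTop (𝓝 μ) := by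
  have hg_top : Tendsto g atTop atTop :=
    tendsto_natCast_atTop_iff.1 (tendsto_atTop_of_tendsto_div_natCast one_pos hg)
  have h := (hT.comp hg_top).mul hg
  rw [mul_one] at h
  refine h.congr' ?_
  filter_upwards [hg_top.eventually_ne_atTop 0] with M hM
  exact div_mul_div_cancel₀ (Nat.cast_ne_zero.2 hM)

lemma tendsto_lastBefore_div {p : ℝ} (hp : 0 < p)
    (hc : Tendsto (fun n => (Nat.count c n : ℝ) / n) atTop (𝓝 p)) :
    Tendsto (fun M => (lastBefore c M : ℝ) / M) atTop (𝓝 1) := by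
  have hcount : Tendsto (fun n => (Nat.count c n : ℝ)) atTop atTop :=
    tendsto_atTop_of_tendsto_div_natCast hp hc
  have hcount_eq : ∀ᶠ M in atTop, Nat.count c (lastBefore c M + 1) = Nat.count c M := by
    filter_upwards [eventually_ne_atTop 0] with M hM
    obtain ⟨M, rfl⟩ := Nat.exists_eq_add_one_of_ne_zero hM
    exact count_lastBefore_add_one M
  have hL_top : Tendsto (fun M => lastBefore c M + 1) atTop atTop := by
    refine tendsto_natCast_atTop_iff.1 (tendsto_atTop_mono' atTop ?_ hcount)
    filter_upwards [hcount_eq] with M hM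
    rw [← hM]
    exact_mod_cast Nat.count_le c
  have hratio : Tendsto (fun M => ((lastBefore c M + 1 : ℕ) : ℝ) / M) atTop (𝓝 1) := by
    have h := hc.div (hc.comp hL_top) hp.ne'
    rw [div_self hp.ne'] at h
    refine h.congr' ?_
    filter_upwards [hcount_eq, hcount.eventually_ne_atTop 0] with M hM hM0
    simp only [Pi.div_apply, Function.comp_apply, hM]
    exact div_div_div_cancel_left' _ _ hM0
  have h := hratio.sub tendsto_one_div_atTop_nhds_zero_nat
  rw [sub_zero] at h
  refine h.congr fun M => ?_
  push_cast
  ring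

end LastBefore

section SamplePath

variable {x s : ℕ → ℕ} {b : ℕ → ℝ}

lemma age_eq_sum_sub_sum_lastBefore (hb0 : b 0 = 0)
    (hrec : ∀ i, b (i + 1) = x i + b i * if x i < s i then 1 else 0) (M : ℕ) :
    b M = ∑ i ∈ range M, (x i : ℝ)
      - ∑ i ∈ range (lastBefore (fun i => s i ≤ x i) M), (x i : ℝ) := by
  induction M with
  | zero => simp [hb0, lastBefore]
  | succ M ih =>
    rw [hrec, ih, lastBefore, sum_range_succ]
    by_cases h : s M ≤ x M
    · rw [if_pos h, if_neg h.not_gt]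
      ring
    · rw [if_neg h, if_pos (not_le.1 h)]
      ring

lemma sum_age_mul_delivered (hb0 : b 0 = 0)
    (hrec : ∀ i, b (i + 1) = x i + b i * if x i < s i then 1 else 0) (M : ℕ) :
    ∑ i ∈ range M, b i * (if s i ≤ x i then 1 else 0) = ∑ i ∈ range M, (x i : ℝ) - b M := by
  induction M with
  | zero => simp [hb0]
  | succ M ih =>
    rw [sum_range_succ, ih, sum_range_succ, hrec]
    by_cases h : s M ≤ x M
    · rw [if_pos h, if_neg h.not_gt]
      ring
    · rw [if_neg h, if_pos (not_le.1 h)]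
      ring

lemma tendsto_age_div (hb0 : b 0 = 0)
    (hrec : ∀ i, b (i + 1) = x i + b i * if x i < s i then 1 else 0) {μ p : ℝ} (hp : 0 < p)
    (hx : Tendsto (fun n => (∑ i ∈ range n, (x i : ℝ)) / n) atTop (𝓝 μ))
    (hdel : Tendsto (fun n => (∑ i ∈ range n, if s i ≤ x i then (1 : ℝ) else 0) / n)
      atTop (𝓝 p)) :
    Tendsto (fun M => b M / M) atTop (𝓝 0) := by
  have hcount : Tendsto (fun n => (Nat.count (fun i => s i ≤ x i) n : ℝ) / n) atTop (𝓝 p) := by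
    simpa only [Nat.count_eq_card_filter_range, sum_boole] using hdel
  have h := hx.sub (tendsto_comp_div_of_tendsto_div hx (tendsto_lastBefore_div hp hcount))
  rw [sub_self] at h
  refine h.congr fun M => ?_
  rw [age_eq_sum_sub_sum_lastBefore hb0 hrec, sub_div]

lemma tendsto_peak_age (hb0 : b 0 = 0)
    (hrec : ∀ i, b (i + 1) = x i + b i * if x i < s i then 1 else 0) {μ ν p : ℝ} (hp : 0 < p)
    (hx : Tendsto (fun n => (∑ i ∈ range n, (x i : ℝ)) / n) atTop (𝓝 μ))
    (hserv : Tendsto (fun n => (∑ i ∈ range n, (s i : ℝ) * if s i ≤ x i then 1 else 0) / n)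
      atTop (𝓝 ν))
    (hdel : Tendsto (fun n => (∑ i ∈ range n, if s i ≤ x i then (1 : ℝ) else 0) / n)
      atTop (𝓝 p)) :
    Tendsto (fun M => (∑ i ∈ range M, (b i + s i - 1) * if s i ≤ x i then (1 : ℝ) else 0) /
        ∑ i ∈ range M, if s i ≤ x i then (1 : ℝ) else 0) atTop (𝓝 (μ / p + ν / p - 1)) := by
  have hpeak : Tendsto
      (fun M => (∑ i ∈ range M, (b i + s i - 1) * if s i ≤ x i then (1 : ℝ) else 0) / M)
      atTop (𝓝 (μ - 0 + ν - p)) := by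
    refine (((hx.sub (tendsto_age_div hb0 hrec hp hx hdel)).add hserv).sub hdel).congr fun M => ?_
    simp only [add_mul, sub_mul, one_mul, sum_add_distrib, sum_sub_distrib,
      sum_age_mul_delivered hb0 hrec]
    ring
  have h := hpeak.div hdel hp.ne'
  rw [show (μ - 0 + ν - p) / p = μ / p + ν / p - 1 by field_simp; ring] at h
  refine h.congr' ?_
  filter_upwards [eventually_ne_atTop 0] with M hM
  exact div_div_div_cancel_right₀ (Nat.cast_ne_zero.2 hM) _ _

end SamplePath

section Boole

variable {Ω : Type*} {P : Ω → Prop} [DecidablePred P]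

lemma boole_eq_indicator_one : (fun ω => if P ω then (1 : ℝ) else 0) = {ω | P ω}.indicator 1 := by
  ext ω
  simp [Set.indicator_apply]

variable [MeasurableSpace Ω] {μ : Measure Ω}

lemma integrable_boole (hP : NullMeasurableSet {ω | P ω} μ) (hfin : μ {ω | P ω} ≠ ⊤) :
    Integrable (fun ω => if P ω then (1 : ℝ) else 0) μ := by
  rw [boole_eq_indicator_one]
  exact (integrableOn_const hfin).integrable_indicator₀ hP

lemma integral_boole (hP : NullMeasurableSet {ω | P ω} μ) :
    ∫ ω, (if P ω then (1 : ℝ) else 0) ∂μ = μ.real {ω | P ω} := by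
  rw [boole_eq_indicator_one, integral_indicator₀ hP]
  simp

end Boole

lemma strong_law_ae_comp {Ω α : Type*} [MeasurableSpace Ω] [MeasurableSpace α] {μ : Measure Ω}
    {Y : ℕ → Ω → α} (hindep : iIndepFun Y μ) (hident : ∀ i, IdentDistrib (Y i) (Y 0) μ μ)
    {φ : α → ℝ} (hφ : Measurable φ) (hint : Integrable (fun ω => φ (Y 0 ω)) μ) :
    ∀ᵐ ω ∂μ, Tendsto (fun n : ℕ => (∑ i ∈ range n, φ (Y i ω)) / n) atTop
      (𝓝 (∫ ω, φ (Y 0 ω) ∂μ)) :=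
  strong_law_ae_real (fun i ω => φ (Y i ω)) hint
    (fun _ _ hij => (hindep.comp (fun _ => φ) (fun _ => hφ)).indepFun hij)
    (fun i => (hident i).comp hφ)

theorem lcfs_peak_age_general
    {Ω : Type*} [MeasureSpace Ω]
    (X S : ℕ → Ω → ℕ) (B : ℕ → Ω → ℝ)
    (hindep : iIndepFun (fun i ω => (X i ω, S i ω)) ℙ)
    (hident : ∀ i,
      IdentDistrib (fun ω => (X i ω, S i ω)) (fun ω => (X 0 ω, S 0 ω)) ℙ ℙ)
    (hXint : Integrable (fun ω => (X 0 ω : ℝ)))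
    (hp : 0 < (ℙ {ω | S 0 ω ≤ X 0 ω}).toReal)
    (hB0 : ∀ ω, B 0 ω = 0)
    (hBrec : ∀ i ω, B (i + 1) ω
      = (X i ω : ℝ) + B i ω * (if X i ω < S i ω then (1 : ℝ) else 0)) :
    ∀ᵐ ω ∂(ℙ : Measure Ω),
      Tendsto (fun M =>
          (∑ i ∈ Finset.range M,
            (B i ω + (S i ω : ℝ) - 1) * (if S i ω ≤ X i ω then (1 : ℝ) else 0)) /
          (∑ i ∈ Finset.range M, (if S i ω ≤ X i ω then (1 : ℝ) else 0)))
        atTop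
        (nhds ((∫ ω', (X 0 ω' : ℝ)) / (ℙ {ω' | S 0 ω' ≤ X 0 ω'}).toReal
          + (∫ ω', (S 0 ω' : ℝ) * (if S 0 ω' ≤ X 0 ω' then (1 : ℝ) else 0)) /
              (ℙ {ω' | S 0 ω' ≤ X 0 ω'}).toReal
          - 1)) := by
  have hY0 := (hident 0).aemeasurable_fst
  have hdel_meas : NullMeasurableSet {ω | S 0 ω ≤ X 0 ω} :=
    hY0.nullMeasurable (measurableSet_le measurable_snd measurable_fst)
  have hdel_fin : ℙ {ω | S 0 ω ≤ X 0 ω} ≠ ⊤ := fun h => by simp [h] at hp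
  have hserv_int : Integrable (fun ω => (S 0 ω : ℝ) * if S 0 ω ≤ X 0 ω then 1 else 0) := by
    refine hXint.mono' ((measurable_of_countable
      (fun q : ℕ × ℕ => (q.2 : ℝ) * if q.2 ≤ q.1 then 1 else 0)).comp_aemeasurable
        hY0).aestronglyMeasurable (ae_of_all _ fun ω => ?_)
    split_ifs with h
    · simpa using h
    · simp
  filter_upwards [strong_law_ae_comp hindep hident (φ := fun q => (q.1 : ℝ))
      (measurable_of_countable _) hXint,
    strong_law_ae_comp hindep hident (φ := fun q => (q.2 : ℝ) * if q.2 ≤ q.1 then 1 else 0)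
      (measurable_of_countable _) hserv_int,
    strong_law_ae_comp hindep hident (φ := fun q => if q.2 ≤ q.1 then 1 else 0)
      (measurable_of_countable _) (integrable_boole hdel_meas hdel_fin)] with ω hx hserv hdel
  rw [integral_boole hdel_meas, measureReal_def] at hdel
  exact tendsto_peak_age (hB0 ω) (hBrec · ω) hp hx hserv hdel

/-- Peak age of the discrete time LCFS G/G/1 queue with preemption: for i.i.d.
pairs `(Xᵢ, Sᵢ)` of positive-integer random variables, with the age-at-generation
chain `B₁ = 0`, `B_{i+1} = Xᵢ + Bᵢ·1_{Sᵢ > Xᵢ}`, and peak values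
`Pᵢ = (Bᵢ + Sᵢ − 1)·1_{Sᵢ ≤ Xᵢ}`, almost surely
`(Σ_{i=1}^M Pᵢ)/(Σ_{i=1}^M 1_{Sᵢ ≤ Xᵢ}) → E[X₁]/p + E[S₁·1_{S₁ ≤ X₁}]/p − 1`,
where `p = P(S₁ ≤ X₁) > 0`.  (Indexing here starts at `0` instead of `1`.) -/
theorem lcfs_peak_age
    {Ω : Type*} [MeasureSpace Ω] [IsProbabilityMeasure (ℙ : Measure Ω)]
    (X S : ℕ → Ω → ℕ) (B : ℕ → Ω → ℝ)
    (hX : ∀ i, Measurable (X i)) (hS : ∀ i, Measurable (S i))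
    (hXpos : ∀ i ω, 0 < X i ω) (hSpos : ∀ i ω, 0 < S i ω)
    (hindep : iIndepFun (fun i ω => (X i ω, S i ω)) ℙ)
    (hident : ∀ i,
      IdentDistrib (fun ω => (X i ω, S i ω)) (fun ω => (X 0 ω, S 0 ω)) ℙ ℙ)
    (hXint : Integrable (fun ω => (X 0 ω : ℝ)))
    (hp : 0 < (ℙ {ω | S 0 ω ≤ X 0 ω}).toReal)
    (hB0 : ∀ ω, B 0 ω = 0)
    (hBrec : ∀ i ω, B (i + 1) ω
      = (X i ω : ℝ) + B i ω * (if X i ω < S i ω then (1 : ℝ) else 0)) :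
    ∀ᵐ ω ∂(ℙ : Measure Ω),
      Tendsto (fun M =>
          (∑ i ∈ Finset.range M,
            (B i ω + (S i ω : ℝ) - 1) * (if S i ω ≤ X i ω then (1 : ℝ) else 0)) /
          (∑ i ∈ Finset.range M, (if S i ω ≤ X i ω then (1 : ℝ) else 0)))
        atTop
        (nhds ((∫ ω', (X 0 ω' : ℝ)) / (ℙ {ω' | S 0 ω' ≤ X 0 ω'}).toReal
          + (∫ ω', (S 0 ω' : ℝ) * (if S 0 ω' ≤ X 0 ω' then (1 : ℝ) else 0)) /
              (ℙ {ω' | S 0 ω' ≤ X 0 ω'}).toReal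
          - 1)) :=
  lcfs_peak_age_general X S B hindep hident hXint hp hB0 hBrec
end

section
/- Let X be an integrable positive-integer-valued random variable that is independent of the pair (T₀, S) of integrable nonnegative-integer-valued random variables, and define T = max(T₀ − X, 0) + S. Then E[X·T] ≤ E[X]·E[T], i.e., X and T are negatively correlated. -/
/-!
Conditionally on `(T₀, S) = (t, s)`, the system time `n ↦ max (t - n) 0 + s` is antitone in the
inter-arrival time `n`, so Chebyshev's integral inequality for the law of `X` bounds
`E[X · T | (T₀, S) = (t, s)]` by `E[X] · E[T | (T₀, S) = (t, s)]`. Independence makes the joint law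
a product measure, and Fubini integrates this bound over the law of `(T₀, S)`.
-/

open MeasureTheory ProbabilityTheory

/-- Chebyshev's integral inequality. -/
lemma integral_mul_le_of_antivary {α : Type*} [MeasurableSpace α] {μ : Measure α}
    [IsProbabilityMeasure μ] {f g : α → ℝ} (hfg : Antivary f g)
    (hf : Integrable f μ) (hg : Integrable g μ) (hfg_int : Integrable (fun x => f x * g x) μ) :
    ∫ x, f x * g x ∂μ ≤ (∫ x, f x ∂μ) * ∫ x, g x ∂μ := by
  set A := ∫ x, f x * g x ∂μ
  set a := ∫ x, f x ∂μ
  set b := ∫ x, g x ∂μ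
  -- Integrate `(f x - f y) * (g x - g y) ≤ 0` first in `x`, then in `y`.
  have h_inner (y : α) : A - g y * a - f y * b + f y * g y ≤ 0 := by
    have h₁ : Integrable (fun x => f x * g x - g y * f x) μ := hfg_int.sub (hf.const_mul _)
    have h₂ : Integrable (fun x => f x * g x - g y * f x - f y * g x) μ :=
      h₁.sub (hg.const_mul _)
    calc A - g y * a - f y * b + f y * g y = ∫ x, (f x - f y) * (g x - g y) ∂μ := by
          rw [show (fun x => (f x - f y) * (g x - g y))
              = fun x => f x * g x - g y * f x - f y * g x + f y * g y by ext; ring,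
            integral_add h₂ (integrable_const _), integral_sub h₁ (hg.const_mul _),
            integral_sub hfg_int (hf.const_mul _), integral_const_mul, integral_const_mul,
            integral_const, probReal_univ, one_smul]
      _ ≤ 0 := integral_nonpos fun x => hfg.sub_mul_sub_nonpos y x
  have h₁ : Integrable (fun y => A - g y * a) μ := (integrable_const _).sub (hg.mul_const _)
  have h₂ : Integrable (fun y => A - g y * a - f y * b) μ := h₁.sub (hf.mul_const _)
  have h_outer : A - b * a - a * b + A ≤ 0 := by
    calc A - b * a - a * b + A = ∫ y, (A - g y * a - f y * b + f y * g y) ∂μ := by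
          rw [integral_add h₂ hfg_int, integral_sub h₁ (hf.mul_const _),
            integral_sub (integrable_const _) (hg.mul_const _), integral_mul_const,
            integral_mul_const, integral_const, probReal_univ, one_smul]
      _ ≤ 0 := integral_nonpos h_inner
  linarith

lemma integral_prod_mul_le_of_antivary {α β : Type*} [MeasurableSpace α] [MeasurableSpace β]
    {μ : Measure α} {ν : Measure β} [IsProbabilityMeasure μ] [SFinite ν]
    {f : α → ℝ} {g : α × β → ℝ} (hfg : ∀ y, Antivary f fun x => g (x, y))
    (hf : Integrable f μ) (hg : Integrable g (μ.prod ν))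
    (hfg_int : Integrable (fun p => f p.1 * g p) (μ.prod ν)) :
    ∫ p, f p.1 * g p ∂μ.prod ν ≤ (∫ x, f x ∂μ) * ∫ p, g p ∂μ.prod ν := by
  rw [integral_prod_symm _ hfg_int, integral_prod_symm _ hg, ← integral_const_mul]
  refine integral_mono_ae hfg_int.integral_prod_right (hg.integral_prod_right.const_mul _) ?_
  filter_upwards [hg.prod_left_ae, hfg_int.prod_left_ae] with y hgy hfgy
  exact integral_mul_le_of_antivary (hfg y) hf hgy hfgy

lemma ProbabilityTheory.IndepFun.integral_mul_le_of_antivary {Ω α β : Type*}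
    [MeasurableSpace Ω] [MeasurableSpace α] [MeasurableSpace β]
    {P : Measure Ω} [IsProbabilityMeasure P]
    {X : Ω → α} {Y : Ω → β} (hX : AEMeasurable X P) (hY : AEMeasurable Y P)
    (hXY : IndepFun X Y P) {f : α → ℝ} {g : α × β → ℝ} (hfm : Measurable f) (hgm : Measurable g)
    (hfg : ∀ y, Antivary f fun x => g (x, y)) (hf : Integrable (fun ω => f (X ω)) P)
    (hg : Integrable (fun ω => g (X ω, Y ω)) P)
    (hfg_int : Integrable (fun ω => f (X ω) * g (X ω, Y ω)) P) :
    ∫ ω, f (X ω) * g (X ω, Y ω) ∂P ≤ (∫ ω, f (X ω) ∂P) * ∫ ω, g (X ω, Y ω) ∂P := by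
  have hXY_meas : AEMeasurable (fun ω => (X ω, Y ω)) P := hX.prodMk hY
  have hlaw : P.map (fun ω => (X ω, Y ω)) = (P.map X).prod (P.map Y) :=
    hXY.map_prod_eq_prod_map_map hX hY
  have hfgm : Measurable fun p : α × β => f p.1 * g p := (hfm.comp measurable_fst).mul hgm
  have := Measure.isProbabilityMeasure_map (μ := P) hX
  rw [← integral_map hXY_meas hfgm.aestronglyMeasurable,
    ← integral_map hX hfm.aestronglyMeasurable,
    ← integral_map hXY_meas hgm.aestronglyMeasurable, hlaw]
  refine integral_prod_mul_le_of_antivary hfg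
    ((integrable_map_measure hfm.aestronglyMeasurable hX).mpr hf) ?_ ?_
  · exact hlaw ▸ (integrable_map_measure hgm.aestronglyMeasurable hXY_meas).mpr hg
  · exact hlaw ▸ (integrable_map_measure hfgm.aestronglyMeasurable hXY_meas).mpr hfg_int

theorem lindley_negative_correlation_general
    {Ω : Type*} [MeasureSpace Ω] [IsProbabilityMeasure (ℙ : Measure Ω)]
    (X T₀ S : Ω → ℕ)
    (hX : Measurable X) (hT₀ : Measurable T₀) (hS : Measurable S)
    (hXint : Integrable (fun ω => (X ω : ℝ)))
    (hT₀int : Integrable (fun ω => (T₀ ω : ℝ)))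
    (hSint : Integrable (fun ω => (S ω : ℝ)))
    (hindep : IndepFun X (fun ω => (T₀ ω, S ω)) ℙ) :
    ∫ ω, (X ω : ℝ) * (max ((T₀ ω : ℝ) - (X ω : ℝ)) 0 + (S ω : ℝ))
      ≤ (∫ ω, (X ω : ℝ))
          * ∫ ω, (max ((T₀ ω : ℝ) - (X ω : ℝ)) 0 + (S ω : ℝ)) := by
  have hT_int : Integrable (fun ω => max ((T₀ ω : ℝ) - X ω) 0 + S ω) :=
    (hT₀int.sub hXint).pos_part.add hSint
  have hX_mul_int : Integrable (fun ω => (X ω : ℝ) * (T₀ ω + S ω)) :=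
    (hindep.comp (φ := fun n : ℕ => (n : ℝ)) (ψ := fun q : ℕ × ℕ => (q.1 : ℝ) + q.2)
      (measurable_of_countable _) (measurable_of_countable _)).integrable_mul hXint
      (hT₀int.add hSint)
  have hXT_int : Integrable (fun ω => (X ω : ℝ) * (max ((T₀ ω : ℝ) - X ω) 0 + S ω)) := by
    refine hX_mul_int.mono' (by fun_prop) (.of_forall fun ω => ?_)
    rw [Real.norm_of_nonneg (by positivity)]
    gcongr
    exact max_le (sub_le_self _ (Nat.cast_nonneg _)) (Nat.cast_nonneg _)
  exact hindep.integral_mul_le_of_antivary hX.aemeasurable (hT₀.prodMk hS).aemeasurable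
    (f := Nat.cast) (g := fun p => max ((p.2.1 : ℝ) - p.1) 0 + p.2.2)
    (measurable_of_countable _) (measurable_of_countable _)
    (fun q => Nat.mono_cast.antivary fun m n hmn => by dsimp only; gcongr)
    hXint hT_int hXT_int

/-- In the Lindley recursion `T = max(T₀ − X, 0) + S` of a FCFS discrete time
queue, if the positive-integer-valued inter-arrival time `X` is integrable and
independent of the pair `(T₀, S)` of integrable nonnegative-integer-valued
random variables, then `X` and `T` are negatively correlated:
`E[X·T] ≤ E[X]·E[T]`. -/
theorem lindley_negative_correlation
    {Ω : Type*} [MeasureSpace Ω] [IsProbabilityMeasure (ℙ : Measure Ω)]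
    (X T₀ S : Ω → ℕ)
    (hX : Measurable X) (hT₀ : Measurable T₀) (hS : Measurable S)
    (hXpos : ∀ ω, 0 < X ω)
    (hXint : Integrable (fun ω => (X ω : ℝ)))
    (hT₀int : Integrable (fun ω => (T₀ ω : ℝ)))
    (hSint : Integrable (fun ω => (S ω : ℝ)))
    (hindep : IndepFun X (fun ω => (T₀ ω, S ω)) ℙ) :
    ∫ ω, (X ω : ℝ) * (max ((T₀ ω : ℝ) - (X ω : ℝ)) 0 + (S ω : ℝ))
      ≤ (∫ ω, (X ω : ℝ))
          * ∫ ω, (max ((T₀ ω : ℝ) - (X ω : ℝ)) 0 + (S ω : ℝ)) :=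
  lindley_negative_correlation_general X T₀ S hX hT₀ hS hXint hT₀int hSint hindep
end

section
/- Let γ ∈ (0,1), let X be geometric on {1,2,...} with parameter γ (P(X = x) = γ(1−γ)^{x−1} for integers x ≥ 1), and let T be a nonnegative-integer-valued random variable independent of X with E[T] < ∞. Then E[X·max(T − X, 0)] = (2E[(1−γ)^T] − 2)/γ² + (E[T(1−γ)^T] − E[(1−γ)^T] + E[T] + 1)/γ. -/
/-!
Conditioning on `T = t` (legitimate by independence), the expectation becomes the finite sum
`∑_{x ≤ t} x (t - x) γ (1 - γ)^(x - 1)`, since the terms with `x > t` vanish. After multiplying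
by `γ³` this sum is a polynomial identity in `γ`, proved by induction on `t`, giving a closed form
in `t` and `(1 - γ)^t`. Averaging the closed form over `T` is then linearity of expectation; every
term is integrable because `0 ≤ (1 - γ)^T ≤ 1` and `T` is integrable.
-/

open MeasureTheory ProbabilityTheory Finset
open scoped ENNReal

section PowerSums

variable {R : Type*} [CommRing R] (γ : R)

theorem sum_range_mul_pow_pred (t : ℕ) :
    γ ^ 2 * ∑ x ∈ range (t + 1), (x : R) * (1 - γ) ^ (x - 1)
      = 1 - (t + 1) * (1 - γ) ^ t + t * (1 - γ) ^ (t + 1) := by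
  induction t with
  | zero => simp
  | succ n ih =>
    rw [sum_range_succ, Nat.add_sub_cancel]
    push_cast
    linear_combination ih

theorem sum_range_mul_sub_mul_pow_pred (t : ℕ) :
    γ ^ 3 * ∑ x ∈ range (t + 1), (x : R) * (t - x) * (1 - γ) ^ (x - 1)
      = 2 * (1 - γ) ^ t - 2 + γ * (t * (1 - γ) ^ t - (1 - γ) ^ t + t + 1) := by
  induction t with
  | zero => simp
  | succ n ih =>
    have hsplit : ∀ x ∈ range (n + 1), (x : R) * ((n + 1 : ℕ) - x) * (1 - γ) ^ (x - 1)
        = x * (n - x) * (1 - γ) ^ (x - 1) + x * (1 - γ) ^ (x - 1) := by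
      intro x _
      push_cast
      ring
    rw [sum_range_succ, sum_congr rfl hsplit, sum_add_distrib]
    push_cast
    linear_combination ih + γ * sum_range_mul_pow_pred γ n

end PowerSums

/-- `E[X · max(t - X, 0)]` for `X` geometric on `{1, 2, …}` with parameter `γ`. -/
noncomputable def geomCrossMean (γ : ℝ) (t : ℕ) : ℝ :=
  ∑ x ∈ range (t + 1), x * (t - x) * (γ * (1 - γ) ^ (x - 1))

theorem geomCrossMean_summand_nonneg {γ : ℝ} (hγ0 : 0 ≤ γ) (hγ1 : γ ≤ 1) {t x : ℕ}
    (hx : x ∈ range (t + 1)) : 0 ≤ (x : ℝ) * (t - x) * (γ * (1 - γ) ^ (x - 1)) := by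
  have hxt : (x : ℝ) ≤ t := by exact_mod_cast Nat.lt_succ_iff.mp (mem_range.mp hx)
  have hq : 0 ≤ 1 - γ := by linarith
  have htx := sub_nonneg.mpr hxt
  positivity

theorem geomCrossMean_nonneg {γ : ℝ} (hγ0 : 0 ≤ γ) (hγ1 : γ ≤ 1) (t : ℕ) :
    0 ≤ geomCrossMean γ t :=
  sum_nonneg fun _ hx => geomCrossMean_summand_nonneg hγ0 hγ1 hx

theorem geomCrossMean_eq {γ : ℝ} (hγ : γ ≠ 0) (t : ℕ) :
    geomCrossMean γ t
      = (2 * (1 - γ) ^ t - 2) / γ ^ 2 + (t * (1 - γ) ^ t - (1 - γ) ^ t + t + 1) / γ := by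
  have h := sum_range_mul_sub_mul_pow_pred γ t
  rw [geomCrossMean]
  simp_rw [← mul_assoc, mul_comm _ γ, mul_assoc γ, ← mul_sum]
  field_simp
  linear_combination h

section Independence

variable {Ω α β : Type*} [MeasurableSpace Ω] [MeasurableSpace α] [MeasurableSpace β]
  {μ : Measure Ω}

theorem ProbabilityTheory.IndepFun.lintegral_comp_eq_lintegral_lintegral [IsFiniteMeasure μ]
    {X : Ω → α} {T : Ω → β} (hX : Measurable X) (hT : Measurable T) (hXT : IndepFun X T μ)
    {f : α → β → ℝ≥0∞} (hf : Measurable (Function.uncurry f)) :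
    ∫⁻ ω, f (X ω) (T ω) ∂μ = ∫⁻ t, ∫⁻ x, f x t ∂(μ.map X) ∂(μ.map T) := by
  calc ∫⁻ ω, f (X ω) (T ω) ∂μ
      = ∫⁻ p, Function.uncurry f p ∂(μ.map fun ω => (X ω, T ω)) :=
        (lintegral_map hf (hX.prodMk hT)).symm
    _ = ∫⁻ t, ∫⁻ x, f x t ∂(μ.map X) ∂(μ.map T) := by
        rw [hXT.map_prod_eq_prod_map_map hX.aemeasurable hT.aemeasurable,
          lintegral_prod_symm' _ hf]
        rfl

end Independence

section Geometric

variable {Ω : Type*} [MeasurableSpace Ω] {μ : Measure Ω} {γ : ℝ} {X : Ω → ℕ}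

theorem lintegral_map_eq_tsum_of_geometric (hX : Measurable X)
    (hgeom : ∀ x : ℕ, 1 ≤ x → μ {ω | X ω = x} = ENNReal.ofReal (γ * (1 - γ) ^ (x - 1)))
    {f : ℕ → ℝ≥0∞} (hf : f 0 = 0) :
    ∫⁻ x, f x ∂(μ.map X) = ∑' x, f x * ENNReal.ofReal (γ * (1 - γ) ^ (x - 1)) := by
  rw [lintegral_countable']
  refine tsum_congr fun x => ?_
  rcases Nat.eq_zero_or_pos x with rfl | hx
  · simp [hf]
  · rw [Measure.map_apply hX (measurableSet_singleton x), ← hgeom x hx]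
    rfl

theorem tsum_ofReal_mul_max_sub_eq_geomCrossMean (hγ0 : 0 ≤ γ) (hγ1 : γ ≤ 1) (t : ℕ) :
    ∑' x : ℕ, ENNReal.ofReal (x * max ((t : ℝ) - x) 0) * ENNReal.ofReal (γ * (1 - γ) ^ (x - 1))
      = ENNReal.ofReal (geomCrossMean γ t) := by
  rw [tsum_eq_sum (s := range (t + 1)) fun x hx => ?vanish]
  case vanish =>
    have hxt : (t : ℝ) ≤ x := by
      rw [mem_range, not_lt] at hx
      exact_mod_cast Nat.le_of_succ_le hx
    simp [max_eq_right (sub_nonpos.mpr hxt)]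
  rw [geomCrossMean, ENNReal.ofReal_sum_of_nonneg fun x hx => ?nonneg]
  case nonneg => exact geomCrossMean_summand_nonneg hγ0 hγ1 hx
  refine sum_congr rfl fun x hx => ?_
  have hxt : (x : ℝ) ≤ t := by exact_mod_cast Nat.lt_succ_iff.mp (mem_range.mp hx)
  rw [max_eq_left (sub_nonneg.mpr hxt), ← ENNReal.ofReal_mul (by positivity)]

end Geometric

section Integrability

variable {Ω : Type*} [MeasurableSpace Ω] {μ : Measure Ω} {T : Ω → ℕ} {q : ℝ}

theorem integrable_pow_comp [IsFiniteMeasure μ] (hT : Measurable T) (hq : |q| ≤ 1) :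
    Integrable (fun ω => q ^ T ω) μ := by
  refine (integrable_const (1 : ℝ)).mono'
    ((measurable_of_countable _).comp hT).aestronglyMeasurable (ae_of_all _ fun ω => ?_)
  rw [norm_pow, Real.norm_eq_abs]
  exact pow_le_one₀ (abs_nonneg q) hq

theorem MeasureTheory.Integrable.natCast_mul_pow_comp (hT : Measurable T)
    (hTint : Integrable (fun ω => (T ω : ℝ)) μ) (hq : |q| ≤ 1) :
    Integrable (fun ω => T ω * q ^ T ω) μ := by
  refine hTint.mono'
    ((measurable_of_countable fun n : ℕ => (n : ℝ) * q ^ n).comp hT).aestronglyMeasurable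
    (ae_of_all _ fun ω => ?_)
  rw [norm_mul, norm_pow, Real.norm_eq_abs, Real.norm_eq_abs, Nat.abs_cast]
  exact mul_le_of_le_one_right (Nat.cast_nonneg _) (pow_le_one₀ (abs_nonneg q) hq)

end Integrability

theorem integral_geomCrossMean_comp {Ω : Type*} [MeasurableSpace Ω] {μ : Measure Ω}
    [IsProbabilityMeasure μ] {γ : ℝ} (hγ0 : 0 < γ) (hγ1 : γ ≤ 1) {T : Ω → ℕ}
    (hT : Measurable T) (hTint : Integrable (fun ω => (T ω : ℝ)) μ) :
    ∫ ω, geomCrossMean γ (T ω) ∂μ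
      = (2 * (∫ ω, (1 - γ) ^ T ω ∂μ) - 2) / γ ^ 2
        + ((∫ ω, (T ω : ℝ) * (1 - γ) ^ T ω ∂μ) - (∫ ω, (1 - γ) ^ T ω ∂μ)
            + (∫ ω, (T ω : ℝ) ∂μ) + 1) / γ := by
  have hq : |1 - γ| ≤ 1 := abs_le.mpr ⟨by linarith, by linarith⟩
  have hpow : Integrable (fun ω => (1 - γ) ^ T ω) μ := integrable_pow_comp hT hq
  have hmul : Integrable (fun ω => T ω * (1 - γ) ^ T ω) μ := hTint.natCast_mul_pow_comp hT hq
  simp_rw [geomCrossMean_eq hγ0.ne']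
  rw [integral_add, integral_div, integral_div, integral_sub, integral_const_mul,
    integral_add, integral_add, integral_sub, integral_const, integral_const]
  · simp
  all_goals first | assumption | fun_prop

/-- For `X` geometric on `{1,2,...}` with parameter `γ ∈ (0,1)` (so
`P(X = x) = γ(1−γ)^{x−1}` for `x ≥ 1`) and `T` a nonnegative-integer-valued
random variable independent of `X` with `E[T] < ∞`,
`E[X·max(T−X,0)] = (2E[(1−γ)^T] − 2)/γ²
  + (E[T(1−γ)^T] − E[(1−γ)^T] + E[T] + 1)/γ`. -/
theorem geometric_cross_term
    {Ω : Type*} [MeasureSpace Ω] [IsProbabilityMeasure (ℙ : Measure Ω)]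
    (γ : ℝ) (hγ0 : 0 < γ) (hγ1 : γ < 1)
    (X T : Ω → ℕ) (hX : Measurable X) (hT : Measurable T)
    (hgeom : ∀ x : ℕ, 1 ≤ x →
      ℙ {ω | X ω = x} = ENNReal.ofReal (γ * (1 - γ) ^ (x - 1)))
    (hindep : IndepFun X T ℙ)
    (hTint : Integrable (fun ω => (T ω : ℝ))) :
    ∫ ω, (X ω : ℝ) * max ((T ω : ℝ) - (X ω : ℝ)) 0
      = (2 * (∫ ω, (1 - γ) ^ T ω) - 2) / γ ^ 2
        + ((∫ ω, (T ω : ℝ) * (1 - γ) ^ T ω) - (∫ ω, (1 - γ) ^ T ω)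
            + (∫ ω, (T ω : ℝ)) + 1) / γ := by
  have hcross : ∫⁻ ω, ENNReal.ofReal (X ω * max ((T ω : ℝ) - X ω) 0)
      = ∫⁻ ω, ENNReal.ofReal (geomCrossMean γ (T ω)) := by
    rw [hindep.lintegral_comp_eq_lintegral_lintegral hX hT
        (f := fun x t => ENNReal.ofReal (x * max ((t : ℝ) - x) 0)) (measurable_of_countable _),
      ← lintegral_map (f := fun t => ENNReal.ofReal (geomCrossMean γ t))
        (measurable_of_countable _) hT]
    refine lintegral_congr fun t => ?_
    rw [lintegral_map_eq_tsum_of_geometric hX hgeom (by simp),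
      tsum_ofReal_mul_max_sub_eq_geomCrossMean hγ0.le hγ1.le]
  rw [← integral_geomCrossMean_comp hγ0 hγ1.le hT hTint,
    integral_eq_lintegral_of_nonneg_ae (ae_of_all _ fun ω => by positivity) (by fun_prop),
    integral_eq_lintegral_of_nonneg_ae (ae_of_all _ fun ω => geomCrossMean_nonneg hγ0.le hγ1.le _)
      ((measurable_of_countable (geomCrossMean γ)).comp hT).aestronglyMeasurable, hcross]
end

section
/- Let γ ∈ (0,1), let S be a positive-integer-valued random variable with finite mean E[S] = 1/μ, set ρ = γ/μ and assume ρ < 1, let V be a positive-integer-valued random variable with finite mean E[V], and let L_S(z) = E[z^S] and L_V(z) = E[z^V]. Then the function g(z) = [(1−ρ)(1−z)L_S(z) / ((1−z) − γ(1−L_S(z)))] · (1 − L_V(z)) / (E[V](1−z)) is differentiable at z = 1−γ with derivative g′(1−γ) = ((1−ρ)/(γ E[V])) · ((1 − L_V(1−γ)) / (γ L_S(1−γ)) − L_V′(1−γ)), where L_V′(1−γ) = E[V(1−γ)^{V−1}]. -/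
/-!
Inside the unit disc a probability generating function may be differentiated under the
integral sign, since `n r^(n-1) ≤ 1 + r + ⋯ + r^(n-1) ≤ (1 - r)⁻¹` gives a uniform bound.
Away from `z = 1` the factor `1 - z` cancels in `g`, leaving a constant multiple of
`L_S (1 - L_V) / ((1 - z) - γ (1 - L_S))`; at `z = 1 - γ` its denominator is
`γ L_S(1 - γ) > 0`, and the quotient rule gives the formula.
-/

open MeasureTheory ProbabilityTheory

lemma natCast_mul_pow_pred_le_inv_one_sub {K : Type*} [Field K] [LinearOrder K]
    [IsStrictOrderedRing K] {r : K} (hr0 : 0 ≤ r) (hr1 : r < 1) (n : ℕ) :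
    (n : K) * r ^ (n - 1) ≤ (1 - r)⁻¹ :=
  calc (n : K) * r ^ (n - 1) = ∑ _i ∈ Finset.range n, r ^ (n - 1) := by simp
    _ ≤ ∑ i ∈ Finset.range n, r ^ i := Finset.sum_le_sum fun i hi =>
        pow_le_pow_of_le_one hr0 hr1.le (by rw [Finset.mem_range] at hi; omega)
    _ ≤ r ^ 0 / (1 - r) := by
        rw [Finset.range_eq_Ico]; exact geom_sum_Ico_le_of_lt_one hr0 hr1
    _ = (1 - r)⁻¹ := by simp

section PGF

variable {Ω : Type*} [MeasurableSpace Ω] {μ : Measure Ω} {N : Ω → ℕ}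

lemma integrable_pow_of_abs_le_one [IsFiniteMeasure μ] (hN : Measurable N) {z : ℝ}
    (hz : |z| ≤ 1) : Integrable (fun ω => z ^ N ω) μ :=
  (integrable_const (1 : ℝ)).mono'
    ((measurable_from_nat (f := fun n : ℕ => z ^ n)).comp hN).aestronglyMeasurable
    (Filter.Eventually.of_forall fun ω => by
      rw [Real.norm_eq_abs, abs_pow]; exact pow_le_one₀ (abs_nonneg z) hz)

lemma integral_pow_pos [IsFiniteMeasure μ] [NeZero μ] (hN : Measurable N) {x : ℝ}
    (hx0 : 0 < x) (hx1 : x ≤ 1) : 0 < ∫ ω, x ^ N ω ∂μ := by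
  rw [integral_pos_iff_support_of_nonneg (fun ω => by positivity)
    (integrable_pow_of_abs_le_one hN (by rwa [abs_of_pos hx0]))]
  have hsupp : Function.support (fun ω => x ^ N ω) = Set.univ :=
    Set.eq_univ_of_forall fun ω => (pow_pos hx0 _).ne'
  rw [hsupp]
  exact Measure.measure_univ_pos.mpr (NeZero.ne μ)

lemma hasDerivAt_integral_pow [IsFiniteMeasure μ] (hN : Measurable N) {x : ℝ} (hx : |x| < 1) :
    HasDerivAt (fun z : ℝ => ∫ ω, z ^ N ω ∂μ) (∫ ω, (N ω : ℝ) * x ^ (N ω - 1) ∂μ) x := by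
  set r : ℝ := (1 + |x|) / 2 with hr
  have hr0 : 0 ≤ r := by positivity
  have hr1 : r < 1 := by linarith
  have hε : (0 : ℝ) < (1 - |x|) / 2 := by linarith
  refine (hasDerivAt_integral_of_dominated_loc_of_deriv_le (F := fun z ω => z ^ N ω)
    (bound := fun _ => (1 - r)⁻¹) (Metric.ball_mem_nhds x hε)
    (Filter.Eventually.of_forall fun z =>
      ((measurable_from_nat (f := fun n : ℕ => z ^ n)).comp hN).aestronglyMeasurable)
    (integrable_pow_of_abs_le_one hN hx.le)
    ((measurable_from_nat (f := fun n : ℕ => (n : ℝ) * x ^ (n - 1))).comp hN).aestronglyMeasurable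
    (Filter.Eventually.of_forall fun ω z hz => ?_) (integrable_const _)
    (Filter.Eventually.of_forall fun ω z _ => hasDerivAt_pow (N ω) z)).2
  have hzr : |z| ≤ r := by
    have hdist : |z - x| < (1 - |x|) / 2 := by rwa [Metric.mem_ball, Real.dist_eq] at hz
    linarith [abs_sub_abs_le_abs_sub z x, hr]
  rw [Real.norm_eq_abs, abs_mul, abs_pow, Nat.abs_cast]
  calc (N ω : ℝ) * |z| ^ (N ω - 1) ≤ (N ω : ℝ) * r ^ (N ω - 1) := by gcongr
    _ ≤ (1 - r)⁻¹ := natCast_mul_pow_pred_le_inv_one_sub hr0 hr1 _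

end PGF

lemma hasDerivAt_mul_one_sub_div_at_one_sub {L K : ℝ → ℝ} {a' b' γ : ℝ} (hγ : γ ≠ 0)
    (hL0 : L (1 - γ) ≠ 0) (hL : HasDerivAt L a' (1 - γ)) (hK : HasDerivAt K b' (1 - γ)) :
    HasDerivAt (fun z => L z * (1 - K z) / ((1 - z) - γ * (1 - L z)))
      ((1 - K (1 - γ)) / (γ ^ 2 * L (1 - γ)) - b' / γ) (1 - γ) := by
  have hD : HasDerivAt (fun z => (1 - z) - γ * (1 - L z)) (-1 - γ * -a') (1 - γ) :=
    ((hasDerivAt_id _).const_sub 1).sub ((hL.const_sub 1).const_mul γ)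
  have hDx : (1 - (1 - γ)) - γ * (1 - L (1 - γ)) = γ * L (1 - γ) := by ring
  refine ((hL.mul (hK.const_sub 1)).div hD (by rw [hDx]; exact mul_ne_zero hγ hL0)).congr_deriv ?_
  rw [hDx, Pi.mul_apply]
  field_simp
  ring

theorem bgv_pgf_deriv_at_general
    {Ω : Type*} [MeasureSpace Ω] [IsProbabilityMeasure (ℙ : Measure Ω)]
    (γ μ : ℝ) (hγ0 : 0 < γ) (hγ1 : γ < 1)
    (S V : Ω → ℕ) (hS : Measurable S) (hV : Measurable V) :
    HasDerivAt
      (fun z : ℝ =>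
        ((1 - γ / μ) * (1 - z) * (∫ ω, z ^ S ω)
            / ((1 - z) - γ * (1 - ∫ ω, z ^ S ω)))
          * ((1 - ∫ ω, z ^ V ω) / ((∫ ω, (V ω : ℝ)) * (1 - z))))
      ((1 - γ / μ) / (γ * ∫ ω, (V ω : ℝ))
        * ((1 - ∫ ω, (1 - γ) ^ V ω) / (γ * ∫ ω, (1 - γ) ^ S ω)
            - ∫ ω, (V ω : ℝ) * (1 - γ) ^ (V ω - 1)))
      (1 - γ) := by
  have hx : |1 - γ| < 1 := by rw [abs_lt]; constructor <;> linarith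
  have hF := hasDerivAt_mul_one_sub_div_at_one_sub hγ0.ne'
    (integral_pow_pos (μ := ℙ) hS (by linarith) (by linarith)).ne'
    (hasDerivAt_integral_pow (μ := ℙ) hS hx) (hasDerivAt_integral_pow (μ := ℙ) hV hx)
  refine ((hF.const_mul ((1 - γ / μ) / ∫ ω, (V ω : ℝ))).congr_of_eventuallyEq ?_).congr_deriv
    (by ring)
  filter_upwards [eventually_ne_nhds (show 1 - γ ≠ 1 by linarith)] with z hz
  have hz' : 1 - z ≠ 0 := sub_ne_zero.mpr (Ne.symm hz)
  generalize (∫ ω, z ^ S ω) = L, (∫ ω, z ^ V ω) = K, (∫ ω, (V ω : ℝ)) = m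
  calc _ = (1 - z) * ((1 - γ / μ) * (L * (1 - K))) / ((1 - z) * (m * (1 - z - γ * (1 - L)))) := by
        rw [div_mul_div_comm]; ring_nf
    _ = _ := by rw [mul_div_mul_left _ _ hz', mul_div_mul_comm]

/-- The probability generating function
`g(z) = [(1−ρ)(1−z)L_S(z)/((1−z) − γ(1−L_S(z)))]·(1 − L_V(z))/(E[V](1−z))`
of the system time in a stable discrete time FCFS Ber/G/1 queue with vacations
is differentiable at `z = 1−γ` with derivative
`g′(1−γ) = ((1−ρ)/(γE[V]))·((1 − L_V(1−γ))/(γL_S(1−γ)) − L_V′(1−γ))`, where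
`L_V′(1−γ) = E[V(1−γ)^{V−1}]`. -/
theorem bgv_pgf_deriv_at
    {Ω : Type*} [MeasureSpace Ω] [IsProbabilityMeasure (ℙ : Measure Ω)]
    (γ μ : ℝ) (hγ0 : 0 < γ) (hγ1 : γ < 1)
    (S V : Ω → ℕ) (hS : Measurable S) (hV : Measurable V)
    (hSpos : ∀ ω, 0 < S ω) (hVpos : ∀ ω, 0 < V ω)
    (hSint : Integrable (fun ω => (S ω : ℝ)))
    (hVint : Integrable (fun ω => (V ω : ℝ)))
    (hμ : ∫ ω, (S ω : ℝ) = 1 / μ)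
    (hρ : γ / μ < 1) :
    HasDerivAt
      (fun z : ℝ =>
        ((1 - γ / μ) * (1 - z) * (∫ ω, z ^ S ω)
            / ((1 - z) - γ * (1 - ∫ ω, z ^ S ω)))
          * ((1 - ∫ ω, z ^ V ω) / ((∫ ω, (V ω : ℝ)) * (1 - z))))
      ((1 - γ / μ) / (γ * ∫ ω, (V ω : ℝ))
        * ((1 - ∫ ω, (1 - γ) ^ V ω) / (γ * ∫ ω, (1 - γ) ^ S ω)
            - ∫ ω, (V ω : ℝ) * (1 - γ) ^ (V ω - 1)))
      (1 - γ) :=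
  bgv_pgf_deriv_at_general γ μ hγ0 hγ1 S V hS hV
end
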